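/- arXiv:2007.13157 — 5 statements merged into one kernel-verified Lean document; each statement's English description precedes it below -/
import Mathlib

section
/- For a network (V,c) and finitely supported real-valued functions f,g on V, one has ⟨2Γ(f,g), f·g⟩ = (1/4)E(f², g²) + Λ(f,g), where Λ(f,g) = (1/4)Σ_{x,y} c(x,y)|f(x)-f(y)|²·|g(x)-g(y)|² and E(u,v) = Σ_{x,y} c(x,y)(u(x)-u(y))(v(x)-v(y)). -/
/-!
Cancelling `π x` turns the left side into the double series of
`c x y (f x - f y) (g x - g y) f x g x`. Averaging it with its image under `x ↔ y` (using
`c x y = c y x`) replaces `f x g x` by `(f x g x + f y g y) / 2`, and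
`2 (a b + a' b') = (a + a') (b + b') + (a - a') (b - b')` splits the result into the two terms
on the right. All double series converge absolutely: their summands are bounded multiples of
`c x y` that vanish unless an endpoint lies in the finite set `supp f ∪ supp g`, and the edges
touching a finite set carry finite total conductance.
-/

section Network

variable {V : Type*} {c : V → V → ℝ}

lemma summable_indicator_fst_conductance (hnonneg : ∀ x y, 0 ≤ c x y)
    (hsum : ∀ x, Summable (fun y => c x y)) {s : Set V} (hs : s.Finite) :
    Summable ((Prod.fst ⁻¹' s).indicator fun p : V × V => c p.1 p.2) := by
  refine (summable_prod_of_nonneg (Set.indicator_nonneg fun p _ => hnonneg _ _)).2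
    ⟨fun x => ?_, summable_of_hasFiniteSupport (hs.subset fun x hx => ?_)⟩
  · by_cases hx : x ∈ s <;> simp [hx, hsum x]
  · by_contra h
    simp [h] at hx

lemma summable_conductance_mul_comp (hsymm : ∀ x y, c x y = c y x)
    (hnonneg : ∀ x y, 0 ≤ c x y) (hsum : ∀ x, Summable (fun y => c x y))
    {α : Type*} [Zero α] {F : V → α} (hF : (Function.support F).Finite)
    (Φ : α → α → ℝ) (hΦ : Φ 0 0 = 0) :
    Summable fun p : V × V => c p.1 p.2 * Φ (F p.1) (F p.2) := by
  have hrange : (Set.range F).Finite :=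
    ((hF.image F).insert 0).subset (Function.range_subset_insert_image_support F)
  obtain ⟨M, hM⟩ := (hrange.image2 (fun a b => |Φ a b|) hrange).bddAbove
  have hΦM : ∀ x y, |Φ (F x) (F y)| ≤ M := fun x y =>
    hM (Set.mem_image2_of_mem (Set.mem_range_self x) (Set.mem_range_self y))
  set s := Function.support F
  set c₁ := (Prod.fst ⁻¹' s).indicator fun p : V × V => c p.1 p.2
  set c₂ := (Prod.snd ⁻¹' s).indicator fun p : V × V => c p.1 p.2
  have hc₁ : Summable c₁ := summable_indicator_fst_conductance hnonneg hsum hF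
  have hc₂ : Summable c₂ := by
    refine ((Equiv.prodComm V V).summable_iff.2 hc₁).congr fun p => ?_
    by_cases h : p.2 ∈ s <;> simp [c₁, c₂, h, hsymm p.1 p.2]
  refine Summable.of_norm_bounded ((hc₁.add hc₂).mul_left M) fun p => ?_
  have hc₁p : 0 ≤ c₁ p := Set.indicator_nonneg (fun q _ => hnonneg _ _) p
  have hc₂p : 0 ≤ c₂ p := Set.indicator_nonneg (fun q _ => hnonneg _ _) p
  have hM0 : 0 ≤ M := (abs_nonneg _).trans (hΦM p.1 p.2)
  rw [Real.norm_eq_abs, abs_mul, abs_of_nonneg (hnonneg _ _)]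
  by_cases hp : p.1 ∈ s ∨ p.2 ∈ s
  · have hc : c p.1 p.2 ≤ c₁ p + c₂ p := by
      rcases hp with h | h
      · linarith [show c₁ p = c p.1 p.2 from Set.indicator_of_mem (s := Prod.fst ⁻¹' s) h _]
      · linarith [show c₂ p = c p.1 p.2 from Set.indicator_of_mem (s := Prod.snd ⁻¹' s) h _]
    calc c p.1 p.2 * |Φ (F p.1) (F p.2)| ≤ c p.1 p.2 * M :=
          mul_le_mul_of_nonneg_left (hΦM _ _) (hnonneg _ _)
      _ ≤ M * (c₁ p + c₂ p) := by rw [mul_comm]; exact mul_le_mul_of_nonneg_left hc hM0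
  · rw [not_or, Function.notMem_support, Function.notMem_support] at hp
    rw [hp.1, hp.2, hΦ, abs_zero, mul_zero]
    exact mul_nonneg hM0 (add_nonneg hc₁p hc₂p)

end Network

lemma tsum_add_tsum_comp_swap {α β : Type*} [AddCommMonoid α] [TopologicalSpace α] [T2Space α]
    [ContinuousAdd α] {L : β × β → α} (hL : Summable L) :
    ∑' p, (L p + L p.swap) = 2 • ∑' p, L p := by
  have hL' : Summable fun p : β × β => L p.swap := (Equiv.prodComm β β).summable_iff.2 hL
  rw [hL.tsum_add hL', two_nsmul]
  exact congrArg _ ((Equiv.prodComm β β).tsum_eq L)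

theorem inner_twoGamma_mul_eq_energy_add_Lambda_general {V : Type*}
    (c : V → V → ℝ) (π : V → ℝ)
    (hsymm : ∀ x y, c x y = c y x)
    (hnonneg : ∀ x y, 0 ≤ c x y)
    (hsum : ∀ x, Summable (fun y => c x y))
    (hπpos : ∀ x, 0 < π x)
    (f g : V → ℝ)
    (hf : (Function.support f).Finite)
    (hg : (Function.support g).Finite) :
    (∑' x : V, π x * (∑' y : V, c x y / π x * (f x - f y) * (g x - g y)) * (f x * g x))
      = (1/4) * (∑' p : V × V, c p.1 p.2 * ((f p.1)^2 - (f p.2)^2) * ((g p.1)^2 - (g p.2)^2))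
        + (1/4) * ∑' p : V × V, c p.1 p.2 * (f p.1 - f p.2)^2 * (g p.1 - g p.2)^2 := by
  have hS := summable_conductance_mul_comp hsymm hnonneg hsum
    (F := fun x => (f x, g x)) (Function.support_prodMk f g ▸ hf.union hg)
  set L : V × V → ℝ := fun p => c p.1 p.2 * ((f p.1 - f p.2) * (g p.1 - g p.2) * (f p.1 * g p.1))
  have hL : Summable L := hS (fun u v => (u.1 - v.1) * (u.2 - v.2) * (u.1 * u.2)) (by simp)
  have hE : Summable fun p : V × V =>
      c p.1 p.2 * ((f p.1)^2 - (f p.2)^2) * ((g p.1)^2 - (g p.2)^2) := by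
    simpa only [mul_assoc] using hS (fun u v => (u.1^2 - v.1^2) * (u.2^2 - v.2^2)) (by simp)
  have hΛ : Summable fun p : V × V => c p.1 p.2 * (f p.1 - f p.2)^2 * (g p.1 - g p.2)^2 := by
    simpa only [mul_assoc] using hS (fun u v => (u.1 - v.1)^2 * (u.2 - v.2)^2) (by simp)
  have hrow : ∀ x, π x * (∑' y, c x y / π x * (f x - f y) * (g x - g y)) * (f x * g x)
      = ∑' y, L (x, y) := fun x => by
    have := (hπpos x).ne'
    rw [← tsum_mul_left, ← tsum_mul_right]
    refine tsum_congr fun y => ?_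
    field_simp
    simp only [L]
    ring
  have hpair : ∀ p : V × V, L p + L p.swap = 2 * ((1/4) * (c p.1 p.2 * ((f p.1)^2 - (f p.2)^2)
      * ((g p.1)^2 - (g p.2)^2)) + (1/4) * (c p.1 p.2 * (f p.1 - f p.2)^2 * (g p.1 - g p.2)^2)) :=
    fun ⟨x, y⟩ => by
      simp only [L, Prod.swap, hsymm y x]
      ring
  calc _ = ∑' x, ∑' y, L (x, y) := tsum_congr hrow
    _ = (1/2) * ∑' p, (L p + L p.swap) := by
      rw [← hL.tsum_prod, tsum_add_tsum_comp_swap hL, nsmul_eq_mul]; ring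
    _ = _ := by
      rw [tsum_congr hpair, tsum_mul_left,
        Summable.tsum_add (hE.mul_left (1/4)) (hΛ.mul_left (1/4)), tsum_mul_left, tsum_mul_left]
      ring

/-- For a network `(V,c)` and finitely supported real functions `f, g`,
`⟨2Γ(f,g), f·g⟩ = (1/4)·E(f², g²) + Λ(f,g)`, where
`2Γ(f,g)(x) = Σ_y P(x,y)(f x - f y)(g x - g y)`,
`E(u,v) = Σ_{x,y} c x y (u x - u y)(v x - v y)` and
`Λ(f,g) = (1/4) Σ_{x,y} c x y (f x - f y)² (g x - g y)²`. -/
theorem inner_twoGamma_mul_eq_energy_add_Lambda {V : Type*}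
    (c : V → V → ℝ) (π : V → ℝ)
    (hsymm : ∀ x y, c x y = c y x)
    (hnonneg : ∀ x y, 0 ≤ c x y)
    (hsum : ∀ x, Summable (fun y => c x y))
    (hπ : ∀ x, π x = ∑' y, c x y)
    (hπpos : ∀ x, 0 < π x)
    (f g : V → ℝ)
    (hf : (Function.support f).Finite)
    (hg : (Function.support g).Finite) :
    (∑' x : V, π x * (∑' y : V, c x y / π x * (f x - f y) * (g x - g y)) * (f x * g x))
      = (1/4) * (∑' p : V × V, c p.1 p.2 * ((f p.1)^2 - (f p.2)^2) * ((g p.1)^2 - (g p.2)^2))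
        + (1/4) * ∑' p : V × V, c p.1 p.2 * (f p.1 - f p.2)^2 * (g p.1 - g p.2)^2 :=
  inner_twoGamma_mul_eq_energy_add_Lambda_general c π hsymm hnonneg hsum hπpos f g hf hg
end

section
/- Let (V,c) be a network, Ω ⊂ V a finite subset of size n, and (λ_i, u_i)_{i=1}^n a Dirichlet system for Ω (orthonormal real eigenfunctions of Δ supported in Ω with eigenvalues λ_1 ≤ ⋯ ≤ λ_n). Then for any k < n and any real-valued function α: V → ℝ, Σ_{i=1}^k (λ_{k+1} − λ_i)² (⟨Γ(α), u_i²⟩ − Λ(α, u_i)) ≤ Σ_{i=1}^k (λ_{k+1} − λ_i) ‖u_i·Δα − 2Γ(α, u_i)‖², where all inner products and norms are with respect to the weight π. -/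
/-!
Write `a i j = ⟨α u_i, u_j⟩`. Since `c` is symmetric, the eigenvalue equations give the commutator
identity `⟨u_i Δα - 2 Γ(α, u_i), u_j⟩ = (λ_j - λ_i) a i j`. As `n = #Ω`, the `u_j` form a basis of
`L²(Ω)`, so Parseval turns `⟨Γ(α), u_i²⟩ - Λ(α, u_i) = ⟨α u_i, u_i Δα - 2 Γ(α, u_i)⟩` into
`∑ j, (λ_j - λ_i) a i j ^ 2`, and Bessel bounds `∑ j, (λ_j - λ_i) ^ 2 a i j ^ 2` by
`‖u_i Δα - 2 Γ(α, u_i)‖²`. What is left is an inequality for the symmetric weights `a i j ^ 2`: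
the difference of its two sides splits into a part antisymmetric in `i, j ≤ k`, which vanishes,
and a part with `j > k`, which is nonnegative because the `λ` are ordered.
-/

open Finset

theorem sum_sq_mul_sum_le_sum_mul_sum_sq {ι : Type*} [DecidableEq ι] {s t : Finset ι}
    (hst : s ⊆ t) {lam : ι → ℝ} {μ : ℝ} {w : ι → ι → ℝ}
    (hw : ∀ i j, w i j = w j i) (hw₀ : ∀ i j, 0 ≤ w i j)
    (hs : ∀ i ∈ s, lam i ≤ μ) (ht : ∀ j ∈ t \ s, μ ≤ lam j) :
    ∑ i ∈ s, (μ - lam i) ^ 2 * ∑ j ∈ t, (lam j - lam i) * w i j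
      ≤ ∑ i ∈ s, (μ - lam i) * ∑ j ∈ t, (lam j - lam i) ^ 2 * w i j := by
  set D : ι → ι → ℝ := fun i j => (μ - lam i) * (lam j - lam i) * (lam j - μ) * w i j
  have hdiff : ∑ i ∈ s, (μ - lam i) * ∑ j ∈ t, (lam j - lam i) ^ 2 * w i j
      - ∑ i ∈ s, (μ - lam i) ^ 2 * ∑ j ∈ t, (lam j - lam i) * w i j
      = ∑ i ∈ s, ∑ j ∈ s, D i j + ∑ i ∈ s, ∑ j ∈ t \ s, D i j := by
    simp only [← sum_sub_distrib, ← sum_add_distrib, mul_sum]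
    refine sum_congr rfl fun i _ => ?_
    rw [← sum_sdiff hst, add_comm]
    congr 1 <;> exact sum_congr rfl fun j _ => by ring
  have hanti : ∑ i ∈ s, ∑ j ∈ s, D i j = 0 := by
    have hswap : ∑ i ∈ s, ∑ j ∈ s, D i j = -∑ i ∈ s, ∑ j ∈ s, D j i := by
      rw [← sum_neg_distrib]
      exact sum_congr rfl fun i _ => by
        rw [← sum_neg_distrib]
        exact sum_congr rfl fun j _ => by simp only [D, hw j i]; ring
    rw [sum_comm (f := fun i j => D j i)] at hswap
    linarith
  have hpos : 0 ≤ ∑ i ∈ s, ∑ j ∈ t \ s, D i j :=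
    sum_nonneg fun i hi => sum_nonneg fun j hj => by
      have hi' := hs i hi
      have hj' := ht j hj
      have hij : 0 ≤ lam j - lam i := by linarith
      exact mul_nonneg (mul_nonneg (mul_nonneg (by linarith) hij) (by linarith)) (hw₀ i j)
  linarith

section Orthonormal

variable {V ι : Type*} [DecidableEq ι] {s : Finset V} {t : Finset ι}
  {w : V → ℝ} {u : ι → V → ℝ}

-- An orthonormal family of `#s` functions on `s` is complete: a one-sided inverse of a square
-- matrix is two-sided.
theorem sum_mul_mul_eq_ite_of_orthonormal [DecidableEq V] (hcard : t.card = s.card)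
    (horth : ∀ j ∈ t, ∀ l ∈ t, ∑ x ∈ s, w x * u j x * u l x = if j = l then 1 else 0)
    {x y : V} (hx : x ∈ s) (hy : y ∈ s) :
    ∑ j ∈ t, u j x * (w y * u j y) = if x = y then 1 else 0 := by
  let M : Matrix s t ℝ := Matrix.of fun x j => u j x
  let N : Matrix t s ℝ := Matrix.of fun j y => w y * u j y
  have hNM : N * M = 1 := by
    ext j l
    simp only [N, M, Matrix.mul_apply, Matrix.of_apply, Matrix.one_apply, Subtype.ext_iff]
    rw [← horth j j.2 l l.2]
    exact sum_coe_sort s fun x => w x * u j x * u l x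
  have hMN : M * N = 1 :=
    (Matrix.mul_eq_one_comm_of_equiv (Fintype.equivOfCardEq (by simpa using hcard.symm))).2 hNM
  have := congrFun (congrFun hMN ⟨x, hx⟩) ⟨y, hy⟩
  simp only [N, M, Matrix.mul_apply, Matrix.of_apply, Matrix.one_apply, Subtype.mk.injEq] at this
  rw [← this]
  exact (sum_coe_sort t fun j => u j x * (w y * u j y)).symm

theorem sum_inner_mul_inner_of_orthonormal (hcard : t.card = s.card)
    (horth : ∀ j ∈ t, ∀ l ∈ t, ∑ x ∈ s, w x * u j x * u l x = if j = l then 1 else 0)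
    (f g : V → ℝ) :
    ∑ j ∈ t, (∑ x ∈ s, w x * f x * u j x) * (∑ y ∈ s, w y * g y * u j y)
      = ∑ x ∈ s, w x * f x * g x := by
  classical
  calc ∑ j ∈ t, (∑ x ∈ s, w x * f x * u j x) * (∑ y ∈ s, w y * g y * u j y)
      = ∑ x ∈ s, w x * f x * ∑ y ∈ s, g y * ∑ j ∈ t, u j x * (w y * u j y) := by
        simp only [sum_mul_sum]
        simp only [mul_sum]
        conv_lhs => rw [sum_comm]
        refine sum_congr rfl fun x _ => ?_
        conv_lhs => rw [sum_comm]
        exact sum_congr rfl fun y _ => sum_congr rfl fun j _ => by ring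
    _ = ∑ x ∈ s, w x * f x * g x := by
        refine sum_congr rfl fun x hx => ?_
        rw [sum_congr rfl fun y hy => by
          rw [sum_mul_mul_eq_ite_of_orthonormal hcard horth hx hy, mul_ite, mul_one, mul_zero],
          sum_ite_eq s x, if_pos hx]

end Orthonormal

section SymmetricKernel

variable {V : Type*} {c : V → V → ℝ} (hc : ∀ x y, c x y = c y x)
include hc

theorem sum_sum_commutator_mul_eq {π α u v : V → ℝ} {Ω : Finset V} {lam μ : ℝ}
    (hu : ∀ x ∈ Ω, ∑ y ∈ Ω, c x y * u y = π x * (1 - lam) * u x)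
    (hv : ∀ x ∈ Ω, ∑ y ∈ Ω, c x y * v y = π x * (1 - μ) * v x) :
    ∑ x ∈ Ω, (∑ y ∈ Ω, c x y * (α x - α y) * u y) * v x
      = (μ - lam) * ∑ x ∈ Ω, π x * (α x * u x) * v x := by
  calc ∑ x ∈ Ω, (∑ y ∈ Ω, c x y * (α x - α y) * u y) * v x
      = ∑ x ∈ Ω, α x * v x * ∑ y ∈ Ω, c x y * u y
        - ∑ x ∈ Ω, ∑ y ∈ Ω, α y * u y * (c y x * v x) := by
        simp only [sum_mul, mul_sum, ← sum_sub_distrib]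
        exact sum_congr rfl fun x _ => sum_congr rfl fun y _ => by rw [hc y x]; ring
    _ = ∑ x ∈ Ω, α x * v x * ∑ y ∈ Ω, c x y * u y
        - ∑ y ∈ Ω, α y * u y * ∑ x ∈ Ω, c y x * v x := by
        rw [sum_comm (s := Ω) (t := Ω) (f := fun x y => α y * u y * (c y x * v x))]
        simp only [mul_sum]
    _ = ∑ x ∈ Ω, α x * v x * (π x * (1 - lam) * u x)
        - ∑ y ∈ Ω, α y * u y * (π y * (1 - μ) * v y) := by
        congr 1
        · exact sum_congr rfl fun x hx => by rw [hu x hx]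
        · exact sum_congr rfl fun y hy => by rw [hv y hy]
    _ = (μ - lam) * ∑ x ∈ Ω, π x * (α x * u x) * v x := by
        rw [mul_sum, ← sum_sub_distrib]
        exact sum_congr rfl fun x _ => by ring

theorem sum_sum_mul_sub_sq_mul_eq (s : Finset V) (α u : V → ℝ) :
    ∑ x ∈ s, ∑ y ∈ s, c x y * (α x - α y) ^ 2 * (u x * u y)
      = 2 * ∑ x ∈ s, α x * u x * ∑ y ∈ s, c x y * (α x - α y) * u y := by
  have hswap : ∑ x ∈ s, ∑ y ∈ s, c x y * (α x - α y) * α y * (u x * u y)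
      = -∑ x ∈ s, ∑ y ∈ s, c x y * (α x - α y) * α x * (u x * u y) := by
    conv_lhs => rw [sum_comm]
    rw [← sum_neg_distrib]
    exact sum_congr rfl fun x _ => by
      rw [← sum_neg_distrib]
      exact sum_congr rfl fun y _ => by rw [hc y x]; ring
  calc ∑ x ∈ s, ∑ y ∈ s, c x y * (α x - α y) ^ 2 * (u x * u y)
      = ∑ x ∈ s, ∑ y ∈ s, c x y * (α x - α y) * α x * (u x * u y)
        - ∑ x ∈ s, ∑ y ∈ s, c x y * (α x - α y) * α y * (u x * u y) := by
        simp only [← sum_sub_distrib]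
        exact sum_congr rfl fun x _ => sum_congr rfl fun y _ => by ring
    _ = 2 * ∑ x ∈ s, α x * u x * ∑ y ∈ s, c x y * (α x - α y) * u y := by
        rw [hswap, sub_neg_eq_add, ← two_mul]
        simp only [mul_sum]
        exact sum_congr rfl fun x _ => sum_congr rfl fun y _ => by ring

end SymmetricKernel

theorem tsum_prod_mul_sub_sq_eq {V : Type*} {K : V → V → ℝ} (hK : ∀ x y, K x y = K y x)
    (hK₀ : ∀ x y, 0 ≤ K x y) (hKs : ∀ x, Summable (K x)) {Ω : Finset V} {u : V → ℝ}
    (hu : ∀ x ∉ Ω, u x = 0) :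
    ∑' p : V × V, K p.1 p.2 * (u p.1 - u p.2) ^ 2
      = 2 * ∑ x ∈ Ω, u x ^ 2 * ∑' y, K x y - 2 * ∑ x ∈ Ω, ∑ y ∈ Ω, K x y * (u x * u y) := by
  have hrow : ∀ x, ∑' y, K x y * u x ^ 2 = u x ^ 2 * ∑' y, K x y := fun x => by
    rw [tsum_mul_right, mul_comm]
  have hf : Summable fun p : V × V => K p.1 p.2 * u p.1 ^ 2 := by
    refine (summable_prod_of_nonneg fun p => mul_nonneg (hK₀ _ _) (sq_nonneg _)).2
      ⟨fun x => (hKs x).mul_right (u x ^ 2), ?_⟩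
    simp only [hrow]
    exact summable_of_ne_finset_zero fun x hx => by rw [hu x hx]; ring
  have hswap : ∑' p : V × V, K p.1 p.2 * u p.2 ^ 2 = ∑' p : V × V, K p.1 p.2 * u p.1 ^ 2 := by
    rw [← (Equiv.prodComm V V).tsum_eq]
    exact tsum_congr fun p => by rw [hK]; rfl
  have hg₀ : ∀ p ∉ Ω ×ˢ Ω, K p.1 p.2 * (u p.1 * u p.2) = 0 := fun p hp => by
    rw [mem_product, not_and_or] at hp
    rcases hp with hp | hp <;> simp [hu _ hp]
  have hg : Summable fun p : V × V => K p.1 p.2 * (u p.1 * u p.2) :=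
    summable_of_ne_finset_zero hg₀
  have hf_eq : ∑' p : V × V, K p.1 p.2 * u p.1 ^ 2 = ∑ x ∈ Ω, u x ^ 2 * ∑' y, K x y := by
    rw [hf.tsum_prod' fun x => (hKs x).mul_right (u x ^ 2)]
    simp only [hrow]
    exact tsum_eq_sum fun x hx => by rw [hu x hx]; ring
  have hg_eq : ∑' p : V × V, K p.1 p.2 * (u p.1 * u p.2)
      = ∑ x ∈ Ω, ∑ y ∈ Ω, K x y * (u x * u y) := by
    rw [tsum_eq_sum hg₀, sum_product]
  have hf' : Summable fun p : V × V => K p.1 p.2 * u p.2 ^ 2 := by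
    rw [← (Equiv.prodComm V V).summable_iff]
    exact hf.congr fun p => by rw [hK]; rfl
  rw [tsum_congr fun p : V × V => show K p.1 p.2 * (u p.1 - u p.2) ^ 2
      = K p.1 p.2 * u p.1 ^ 2 + K p.1 p.2 * u p.2 ^ 2 - 2 * (K p.1 p.2 * (u p.1 * u p.2)) by ring,
    (hf.add hf').tsum_sub (hg.mul_left 2), hf.tsum_add hf', tsum_mul_left, hswap, hf_eq, hg_eq]
  ring

-- The left side is `(u Δα - 2 Γ(α, u))(x)`.
theorem mul_tsum_sub_tsum_eq_sum_div {V : Type*} {c : V → V → ℝ} {π : V → ℝ} {Ω : Finset V}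
    {α u : V → ℝ} (hu : ∀ y ∉ Ω, u y = 0) {x : V}
    (hα : Summable fun y => c x y * (α x - α y)) :
    u x * ∑' y, c x y / π x * (α x - α y) - ∑' y, c x y / π x * (α x - α y) * (u x - u y)
      = (∑ y ∈ Ω, c x y * (α x - α y) * u y) / π x := by
  have hαu : Summable fun y => c x y * (α x - α y) * u y :=
    summable_of_ne_finset_zero fun y hy => by rw [hu y hy, mul_zero]
  have h₁ : ∑' y, c x y / π x * (α x - α y) = (∑' y, c x y * (α x - α y)) / π x := by
    simp_rw [div_mul_eq_mul_div, tsum_div_const]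
  have h₂ : ∑' y, c x y / π x * (α x - α y) * (u x - u y)
      = (u x * ∑' y, c x y * (α x - α y) - ∑ y ∈ Ω, c x y * (α x - α y) * u y) / π x := by
    rw [tsum_congr fun y => show c x y / π x * (α x - α y) * (u x - u y)
        = (u x * (c x y * (α x - α y)) - c x y * (α x - α y) * u y) / π x by ring,
      tsum_div_const, (hα.mul_left _).tsum_sub hαu, tsum_mul_left,
      tsum_eq_sum (f := fun y => c x y * (α x - α y) * u y) fun y hy => by
        rw [hu y hy, mul_zero]]
  rw [h₁, h₂]
  ring

structure IsNetwork {V : Type*} (c : V → V → ℝ) (π : V → ℝ) : Prop where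
  symm : ∀ x y, c x y = c y x
  nonneg : ∀ x y, 0 ≤ c x y
  summable : ∀ x, Summable (c x)
  weight_eq_tsum : ∀ x, π x = ∑' y, c x y
  weight_pos : ∀ x, 0 < π x

namespace IsNetwork

variable {V : Type*} {c : V → V → ℝ} {π : V → ℝ} {Ω : Finset V} {α : V → ℝ}

theorem sum_le_weight (hN : IsNetwork c π) (x : V) (s : Finset V) : ∑ y ∈ s, c x y ≤ π x :=
  hN.weight_eq_tsum x ▸ (hN.summable x).sum_le_tsum s fun y _ => hN.nonneg x y

theorem sum_mul_eq_of_laplacian_eq (hN : IsNetwork c π) {u : V → ℝ} (hu : ∀ y ∉ Ω, u y = 0)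
    {lam : ℝ} {x : V} (h : ∑' y, c x y / π x * (u x - u y) = lam * u x) :
    ∑ y ∈ Ω, c x y * u y = π x * (1 - lam) * u x := by
  have hcu : Summable fun y => c x y * u y :=
    summable_of_ne_finset_zero fun y hy => by rw [hu y hy, mul_zero]
  have hsplit : ∀ y, c x y / π x * (u x - u y) = (c x y * u x - c x y * u y) / π x :=
    fun y => by ring
  simp_rw [hsplit, tsum_div_const] at h
  rw [((hN.summable x).mul_right (u x)).tsum_sub hcu, tsum_mul_right, ← hN.weight_eq_tsum,
    tsum_eq_sum fun y hy => by rw [hu y hy, mul_zero],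
    div_eq_iff (hN.weight_pos x).ne'] at h
  linarith

theorem summable_weight_mul_div_sq (hN : IsNetwork c π)
    (hα : ∀ x, Summable fun y => c x y * (α x - α y) ^ 2) (s : Finset V) (u : V → ℝ) :
    Summable fun x => π x * ((∑ y ∈ s, c x y * (α x - α y) * u y) / π x) ^ 2 := by
  have hcol : ∀ y, Summable fun x => c x y * (α x - α y) ^ 2 * u y ^ 2 := fun y =>
    ((hα y).mul_right (u y ^ 2)).congr fun x => by rw [hN.symm x y]; ring
  refine Summable.of_nonneg_of_le (fun x => ?_) (fun x => ?_)
    (summable_sum (s := s) fun y _ => hcol y)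
  · have := hN.weight_pos x
    positivity
  have hπx := hN.weight_pos x
  have hcs : (∑ y ∈ s, c x y * (α x - α y) * u y) ^ 2
      ≤ (∑ y ∈ s, c x y) * ∑ y ∈ s, c x y * (α x - α y) ^ 2 * u y ^ 2 :=
    sum_sq_le_sum_mul_sum_of_sq_le_mul s (fun y _ => hN.nonneg x y)
      (fun y _ => by have := hN.nonneg x y; positivity) fun y _ => le_of_eq (by ring)
  have hsum := hN.sum_le_weight x s
  have hrest : 0 ≤ ∑ y ∈ s, c x y * (α x - α y) ^ 2 * u y ^ 2 :=
    sum_nonneg fun y _ => by have := hN.nonneg x y; positivity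
  rw [div_pow, mul_div_assoc', sq (π x), mul_div_mul_left _ _ hπx.ne', div_le_iff₀ hπx,
    mul_comm _ (π x)]
  exact hcs.trans (mul_le_mul_of_nonneg_right hsum hrest)

theorem gamma_sub_lambda_eq (hN : IsNetwork c π)
    (hα : ∀ x, Summable fun y => c x y * (α x - α y) ^ 2) {Ω : Finset V} {u : V → ℝ}
    (hu : ∀ x ∉ Ω, u x = 0) :
    (∑' x, π x * ((1/2) * ∑' y, c x y / π x * (α x - α y) ^ 2) * u x ^ 2)
        - (1/4) * ∑' p : V × V, c p.1 p.2 * (α p.1 - α p.2) ^ 2 * (u p.1 - u p.2) ^ 2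
      = ∑ x ∈ Ω, π x * (α x * u x) * ((∑ y ∈ Ω, c x y * (α x - α y) * u y) / π x) := by
  have hform := tsum_prod_mul_sub_sq_eq (K := fun x y => c x y * (α x - α y) ^ 2)
    (fun x y => by rw [hN.symm]; ring) (fun x y => mul_nonneg (hN.nonneg x y) (sq_nonneg _))
    hα hu
  have hdiag : ∀ x, π x * ((1/2) * ∑' y, c x y / π x * (α x - α y) ^ 2) * u x ^ 2
      = (1/2) * (u x ^ 2 * ∑' y, c x y * (α x - α y) ^ 2) := fun x => by
    simp_rw [div_mul_eq_mul_div, tsum_div_const]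
    field_simp [(hN.weight_pos x).ne']
  have hcancel : ∀ x, π x * (α x * u x) * ((∑ y ∈ Ω, c x y * (α x - α y) * u y) / π x)
      = α x * u x * ∑ y ∈ Ω, c x y * (α x - α y) * u y := fun x => by
    field_simp [(hN.weight_pos x).ne']
  rw [tsum_congr hdiag, tsum_eq_sum (s := Ω) fun x hx => by rw [hu x hx]; ring, ← mul_sum, hform,
    sum_sum_mul_sub_sq_mul_eq hN.symm, sum_congr rfl fun x _ => hcancel x]
  ring

end IsNetwork

structure IsDirichletEigenbasis {V : Type*} (c : V → V → ℝ) (π : V → ℝ) (Ω : Finset V) (n : ℕ)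
    (lam : ℕ → ℝ) (u : ℕ → V → ℝ) : Prop where
  card_eq : n = Ω.card
  support : ∀ i ∈ Icc 1 n, ∀ x ∉ Ω, u i x = 0
  eigen : ∀ i ∈ Icc 1 n, ∀ x ∈ Ω, ∑' y, c x y / π x * (u i x - u i y) = lam i * u i x
  orthonormal : ∀ i ∈ Icc 1 n, ∀ j ∈ Icc 1 n,
    ∑' x, π x * u i x * u j x = if i = j then 1 else 0

namespace IsDirichletEigenbasis

variable {V : Type*} {c : V → V → ℝ} {π : V → ℝ} {Ω : Finset V} {n : ℕ} {lam : ℕ → ℝ}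
  {u : ℕ → V → ℝ} {α : V → ℝ}

theorem orthonormal_sum (hD : IsDirichletEigenbasis c π Ω n lam u) :
    ∀ i ∈ Icc 1 n, ∀ j ∈ Icc 1 n, ∑ x ∈ Ω, π x * u i x * u j x = if i = j then 1 else 0 :=
  fun i hi j hj => by
    rw [← hD.orthonormal i hi j hj, tsum_eq_sum fun x hx => by rw [hD.support i hi x hx]; ring]

theorem sum_inner_mul_inner (hD : IsDirichletEigenbasis c π Ω n lam u) (f g : V → ℝ) :
    ∑ j ∈ Icc 1 n, (∑ x ∈ Ω, π x * f x * u j x) * (∑ y ∈ Ω, π y * g y * u j y)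
      = ∑ x ∈ Ω, π x * f x * g x :=
  sum_inner_mul_inner_of_orthonormal (by simp [hD.card_eq]) hD.orthonormal_sum f g

theorem inner_commutator_eq (hD : IsDirichletEigenbasis c π Ω n lam u) (hN : IsNetwork c π)
    {i j : ℕ} (hi : i ∈ Icc 1 n) (hj : j ∈ Icc 1 n) :
    ∑ x ∈ Ω, π x * ((∑ y ∈ Ω, c x y * (α x - α y) * u i y) / π x) * u j x
      = (lam j - lam i) * ∑ x ∈ Ω, π x * (α x * u i x) * u j x := by
  have heig : ∀ l ∈ Icc 1 n, ∀ x ∈ Ω, ∑ y ∈ Ω, c x y * u l y = π x * (1 - lam l) * u l x :=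
    fun l hl x hx => hN.sum_mul_eq_of_laplacian_eq (hD.support l hl) (hD.eigen l hl x hx)
  rw [← sum_sum_commutator_mul_eq hN.symm (heig i hi) (heig j hj)]
  exact sum_congr rfl fun x _ => by rw [mul_div_cancel₀ _ (hN.weight_pos x).ne']

theorem gamma_sub_lambda_eq_sum (hD : IsDirichletEigenbasis c π Ω n lam u)
    (hN : IsNetwork c π) (hα : ∀ x, Summable fun y => c x y * (α x - α y) ^ 2)
    {i : ℕ} (hi : i ∈ Icc 1 n) :
    (∑' x, π x * ((1/2) * ∑' y, c x y / π x * (α x - α y) ^ 2) * u i x ^ 2)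
        - (1/4) * ∑' p : V × V, c p.1 p.2 * (α p.1 - α p.2) ^ 2 * (u i p.1 - u i p.2) ^ 2
      = ∑ j ∈ Icc 1 n, (lam j - lam i) * (∑ x ∈ Ω, π x * (α x * u i x) * u j x) ^ 2 := by
  rw [hN.gamma_sub_lambda_eq hα (hD.support i hi), ← hD.sum_inner_mul_inner]
  exact sum_congr rfl fun j hj => by rw [hD.inner_commutator_eq hN hi hj]; ring

theorem sum_sq_le_tsum_sq (hD : IsDirichletEigenbasis c π Ω n lam u) (hN : IsNetwork c π)
    (hα₁ : ∀ x, Summable fun y => c x y * (α x - α y))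
    (hα₂ : ∀ x, Summable fun y => c x y * (α x - α y) ^ 2) {i : ℕ} (hi : i ∈ Icc 1 n) :
    ∑ j ∈ Icc 1 n, (lam j - lam i) ^ 2 * (∑ x ∈ Ω, π x * (α x * u i x) * u j x) ^ 2
      ≤ ∑' x, π x * (u i x * (∑' y, c x y / π x * (α x - α y))
          - ∑' y, c x y / π x * (α x - α y) * (u i x - u i y)) ^ 2 := by
  set g : V → ℝ := fun x => (∑ y ∈ Ω, c x y * (α x - α y) * u i y) / π x
  calc ∑ j ∈ Icc 1 n, (lam j - lam i) ^ 2 * (∑ x ∈ Ω, π x * (α x * u i x) * u j x) ^ 2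
      = ∑ j ∈ Icc 1 n, (∑ x ∈ Ω, π x * g x * u j x) * (∑ y ∈ Ω, π y * g y * u j y) :=
        sum_congr rfl fun j hj => by rw [hD.inner_commutator_eq hN hi hj]; ring
    _ = ∑ x ∈ Ω, π x * g x ^ 2 := by
        rw [hD.sum_inner_mul_inner]
        exact sum_congr rfl fun x _ => by ring
    _ ≤ ∑' x, π x * g x ^ 2 :=
        (hN.summable_weight_mul_div_sq hα₂ Ω (u i)).sum_le_tsum Ω fun x _ => by
          have := hN.weight_pos x
          positivity
    _ = _ := tsum_congr fun x => by rw [mul_tsum_sub_tsum_eq_sum_div (hD.support i hi) (hα₁ x)]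

end IsDirichletEigenbasis

/-- main universal estimate, Lemma `main bound`:
Let `(V,c)` be a network, `Ω` a finite subset of size `n`, and `(λ_i, u_i)_{i=1}^n`
a Dirichlet system for `Ω`.  Then for any `k < n` and any `α : V → ℝ`,
`Σ_{i=1}^k (λ_{k+1} − λ_i)² (⟨Γ(α), u_i²⟩ − Λ(α, u_i))
  ≤ Σ_{i=1}^k (λ_{k+1} − λ_i) ‖u_i·Δα − 2Γ(α, u_i)‖²`,
all inner products/norms being with respect to the weight `π`. -/
theorem universal_inequality_dirichlet_system {V : Type*}
    (c : V → V → ℝ) (π : V → ℝ)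
    (hsymm : ∀ x y, c x y = c y x)
    (hnonneg : ∀ x y, 0 ≤ c x y)
    (hsum : ∀ x, Summable (fun y => c x y))
    (hπ : ∀ x, π x = ∑' y, c x y)
    (hπpos : ∀ x, 0 < π x)
    (Ω : Finset V) (n : ℕ) (hn : n = Ω.card)
    (lam : ℕ → ℝ) (u : ℕ → V → ℝ)
    -- eigenvalues ordered
    (hmono : ∀ i j, 1 ≤ i → i ≤ j → j ≤ n → lam i ≤ lam j)
    -- eigenfunctions supported in Ω
    (hsupp : ∀ i, 1 ≤ i → i ≤ n → ∀ x, x ∉ Ω → u i x = 0)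
    -- Dirichlet eigenvalue equation on Ω
    (heig : ∀ i, 1 ≤ i → i ≤ n → ∀ x ∈ Ω,
      (∑' y : V, c x y / π x * (u i x - u i y)) = lam i * u i x)
    -- orthonormality in L²(V,π)
    (hortho : ∀ i j, 1 ≤ i → i ≤ n → 1 ≤ j → j ≤ n →
      (∑' x : V, π x * u i x * u j x) = if i = j then 1 else 0)
    (k : ℕ) (hk : k < n)
    (α : V → ℝ)
    -- summability of the test-function increments
    (hα1 : ∀ x, Summable (fun y => c x y * |α x - α y|))
    (hα2 : ∀ x, Summable (fun y => c x y * (α x - α y) ^ 2)) :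
    ∑ i ∈ Finset.Icc 1 k, (lam (k+1) - lam i) ^ 2 *
        ((∑' x : V, π x * ((1/2) * ∑' y : V, c x y / π x * (α x - α y) ^ 2) * (u i x) ^ 2)
          - (1/4) * ∑' p : V × V, c p.1 p.2 * (α p.1 - α p.2) ^ 2 * (u i p.1 - u i p.2) ^ 2)
      ≤ ∑ i ∈ Finset.Icc 1 k, (lam (k+1) - lam i) *
          (∑' x : V, π x *
            (u i x * (∑' y : V, c x y / π x * (α x - α y))
              - ∑' y : V, c x y / π x * (α x - α y) * (u i x - u i y)) ^ 2) := by
  have hN : IsNetwork c π := ⟨hsymm, hnonneg, hsum, hπ, hπpos⟩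
  have hD : IsDirichletEigenbasis c π Ω n lam u :=
    { card_eq := hn
      support := fun i hi => hsupp i (mem_Icc.1 hi).1 (mem_Icc.1 hi).2
      eigen := fun i hi => heig i (mem_Icc.1 hi).1 (mem_Icc.1 hi).2
      orthonormal := fun i hi j hj =>
        hortho i j (mem_Icc.1 hi).1 (mem_Icc.1 hi).2 (mem_Icc.1 hj).1 (mem_Icc.1 hj).2 }
  have hα : ∀ x, Summable fun y => c x y * (α x - α y) := fun x =>
    ((hα1 x).congr fun y => by rw [abs_mul, abs_of_nonneg (hnonneg x y)]).of_abs
  have hkn : Icc 1 k ⊆ Icc 1 n := Icc_subset_Icc_right hk.le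
  have hlow : ∀ i ∈ Icc 1 k, lam i ≤ lam (k + 1) := fun i hi =>
    hmono i (k + 1) (mem_Icc.1 hi).1 (Nat.le_succ_of_le (mem_Icc.1 hi).2) hk
  have hhigh : ∀ j ∈ Icc 1 n \ Icc 1 k, lam (k + 1) ≤ lam j := fun j hj => by
    simp only [mem_sdiff, mem_Icc, not_and, not_le] at hj
    exact hmono (k + 1) j (by omega) (by omega) hj.1.2
  calc _ = ∑ i ∈ Icc 1 k, (lam (k + 1) - lam i) ^ 2 *
          ∑ j ∈ Icc 1 n, (lam j - lam i) * (∑ x ∈ Ω, π x * (α x * u i x) * u j x) ^ 2 :=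
        sum_congr rfl fun i hi => by rw [hD.gamma_sub_lambda_eq_sum hN hα2 (hkn hi)]
    _ ≤ ∑ i ∈ Icc 1 k, (lam (k + 1) - lam i) *
          ∑ j ∈ Icc 1 n, (lam j - lam i) ^ 2 * (∑ x ∈ Ω, π x * (α x * u i x) * u j x) ^ 2 :=
        sum_sq_mul_sum_le_sum_mul_sum_sq hkn (fun i j => by
          rw [sum_congr rfl fun x _ => show π x * (α x * u i x) * u j x
            = π x * (α x * u j x) * u i x by ring])
          (fun _ _ => sq_nonneg _) hlow hhigh
    _ ≤ _ := sum_le_sum fun i hi => mul_le_mul_of_nonneg_left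
        (hD.sum_sq_le_tsum_sq hN hα hα2 (hkn hi)) (sub_nonneg.2 (hlow i hi))
end

section
/- Let λ_min ≤ λ_1 ≤ ⋯ ≤ λ_{k+1} be real numbers with λ_k ≤ 1 + C for some C > 0, λ_1 < λ_{k+1}, Σ_{i=1}^k(1−λ_i) > 0, and suppose Σ_{i=1}^k (λ_{k+1}−λ_i)²(1−λ_i) ≤ C·Σ_{i=1}^k (λ_{k+1}−λ_i)(λ_i−λ_min). Then λ_{k+1} − λ_min ≤ [Σ_{i=1}^k (λ_i−λ_min)(1+C−λ_i)] / [Σ_{i=1}^k (1−λ_i)]. -/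
/-!
Put `μ_i = λ_i − λ_min`, `a_i = λ_{k+1} − λ_i` and `b_i = a_i (1 − λ_i) − C μ_i`. The Yang-type
hypothesis says exactly `∑ a_i b_i ≤ 0`, and after clearing the positive denominator the claimed
bound says exactly `∑ b_i ≤ 0`. Both `a_i` and `b_i` are antitone functions of `λ_i` on
`λ_i ≤ min (λ_{k+1}, 1 + C)` (the difference quotient of `b` at `λ_i ≤ λ_j` is
`−(λ_{k+1} − λ_j) − (1 + C − λ_i)`), so Chebyshev's sum inequality gives
`(∑ a_i)(∑ b_i) ≤ k ∑ a_i b_i ≤ 0`, and `∑ a_i > 0` because `λ_1 < λ_{k+1}`.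
-/

open Finset

theorem MonovaryOn.sum_nonpos_of_sum_pos_of_sum_mul_nonpos {ι α : Type*} [Semiring α]
    [LinearOrder α] [IsStrictOrderedRing α] [ExistsAddOfLE α] {s : Finset ι} {f g : ι → α}
    (hfg : MonovaryOn f g s) (hf : 0 < ∑ i ∈ s, f i) (hmul : ∑ i ∈ s, f i * g i ≤ 0) :
    ∑ i ∈ s, g i ≤ 0 := by
  refine nonpos_of_mul_nonpos_right ?_ hf
  calc (∑ i ∈ s, f i) * ∑ i ∈ s, g i ≤ #s * ∑ i ∈ s, f i * g i :=
        hfg.sum_mul_sum_le_card_mul_sum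
    _ ≤ 0 := mul_nonpos_of_nonneg_of_nonpos (Nat.cast_nonneg _) hmul

theorem antitoneOn_sub_mul_one_sub_sub_mul (L m C : ℝ) :
    AntitoneOn (fun x => (L - x) * (1 - x) - C * (x - m)) (Set.Iic L ∩ Set.Iic (1 + C)) := by
  rintro x ⟨-, hxC : x ≤ 1 + C⟩ y ⟨hyL : y ≤ L, -⟩ (hxy : x ≤ y)
  have hdiff : ((L - x) * (1 - x) - C * (x - m)) - ((L - y) * (1 - y) - C * (y - m))
      = (y - x) * ((L - y) + (1 + C - x)) := by ring
  have : 0 ≤ (y - x) * ((L - y) + (1 + C - x)) := mul_nonneg (by linarith) (by linarith)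
  linarith

theorem sub_le_sum_div_sum_of_yang_inequality {ι : Type*} (s : Finset ι) (x : ι → ℝ)
    (L m C : ℝ) (hxL : ∀ i ∈ s, x i ≤ L) (hxC : ∀ i ∈ s, x i ≤ 1 + C) (hsL : ∃ i ∈ s, x i < L)
    (hpos : 0 < ∑ i ∈ s, (1 - x i))
    (hyang : ∑ i ∈ s, (L - x i) ^ 2 * (1 - x i) ≤ C * ∑ i ∈ s, (L - x i) * (x i - m)) :
    L - m ≤ (∑ i ∈ s, (x i - m) * (1 + C - x i)) / ∑ i ∈ s, (1 - x i) := by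
  set w : ℝ → ℝ := fun t => (L - t) * (1 - t) - C * (t - m)
  have hmv : MonovaryOn (fun i => L - x i) (w ∘ x) s := by
    refine ((monovaryOn_self x s).comp_antitone_on_left (f' := (L - ·)) ?_)
      |>.comp_antitoneOn_right ?_
    · exact fun a b hab => sub_le_sub_left hab L
    · refine (antitoneOn_sub_mul_one_sub_sub_mul L m C).mono ?_
      rintro _ ⟨i, hi, rfl⟩
      exact ⟨hxL i hi, hxC i hi⟩
  have hsum_pos : 0 < ∑ i ∈ s, (L - x i) := by
    refine sum_pos' (fun i hi => sub_nonneg.2 (hxL i hi)) ?_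
    obtain ⟨i, hi, hlt⟩ := hsL
    exact ⟨i, hi, sub_pos.2 hlt⟩
  have hmul : ∑ i ∈ s, (L - x i) * w (x i) ≤ 0 := by
    have : ∑ i ∈ s, (L - x i) * w (x i)
        = ∑ i ∈ s, (L - x i) ^ 2 * (1 - x i) - C * ∑ i ∈ s, (L - x i) * (x i - m) := by
      rw [mul_sum, ← sum_sub_distrib]
      exact sum_congr rfl fun i _ => by ring
    linarith
  have hw : ∑ i ∈ s, w (x i) ≤ 0 := hmv.sum_nonpos_of_sum_pos_of_sum_mul_nonpos hsum_pos hmul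
  have : (L - m) * ∑ i ∈ s, (1 - x i) - ∑ i ∈ s, (x i - m) * (1 + C - x i)
      = ∑ i ∈ s, w (x i) := by
    rw [mul_sum, ← sum_sub_distrib]
    exact sum_congr rfl fun i _ => by ring
  rw [le_div_iff₀ hpos]
  linarith

theorem yang_second_inequality_general (C lamMin : ℝ) (k : ℕ) (lam : ℕ → ℝ)
    (hk : 1 ≤ k)
    (hmono : ∀ i j, 1 ≤ i → i ≤ j → j ≤ k + 1 → lam i ≤ lam j)
    (hupper : lam k ≤ 1 + C)
    (hlt : lam 1 < lam (k+1))
    (hpos : 0 < ∑ i ∈ Finset.Icc 1 k, (1 - lam i))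
    (hyang : ∑ i ∈ Finset.Icc 1 k, (lam (k+1) - lam i) ^ 2 * (1 - lam i)
      ≤ C * ∑ i ∈ Finset.Icc 1 k, (lam (k+1) - lam i) * (lam i - lamMin)) :
    lam (k+1) - lamMin ≤
      (∑ i ∈ Finset.Icc 1 k, (lam i - lamMin) * (1 + C - lam i)) /
        (∑ i ∈ Finset.Icc 1 k, (1 - lam i)) := by
  refine sub_le_sum_div_sum_of_yang_inequality _ lam _ _ _ (fun i hi => ?_) (fun i hi => ?_)
    ⟨1, mem_Icc.2 ⟨le_rfl, hk⟩, hlt⟩ hpos hyang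
  all_goals obtain ⟨hi1, hik⟩ := mem_Icc.1 hi
  · exact hmono i (k + 1) hi1 (by omega) le_rfl
  · exact (hmono i k hi1 hik (by omega)).trans hupper

/-- discrete Yang second inequality: if `λ_min ≤ λ_1 ≤ ⋯ ≤ λ_{k+1}`,
`λ_k ≤ 1 + C` with `C > 0`, `λ_1 < λ_{k+1}`, `Σ_{i=1}^k (1−λ_i) > 0`, and the Yang-type
inequality holds, then
`λ_{k+1} − λ_min ≤ [Σ_{i=1}^k (λ_i−λ_min)(1+C−λ_i)] / [Σ_{i=1}^k (1−λ_i)]`. -/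
theorem yang_second_inequality (C lamMin : ℝ) (k : ℕ) (lam : ℕ → ℝ)
    (hC : 0 < C) (hk : 1 ≤ k)
    (hmin : lamMin ≤ lam 1)
    (hmono : ∀ i j, 1 ≤ i → i ≤ j → j ≤ k + 1 → lam i ≤ lam j)
    (hupper : lam k ≤ 1 + C)
    (hlt : lam 1 < lam (k+1))
    (hpos : 0 < ∑ i ∈ Finset.Icc 1 k, (1 - lam i))
    (hyang : ∑ i ∈ Finset.Icc 1 k, (lam (k+1) - lam i) ^ 2 * (1 - lam i)
      ≤ C * ∑ i ∈ Finset.Icc 1 k, (lam (k+1) - lam i) * (lam i - lamMin)) :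
    lam (k+1) - lamMin ≤
      (∑ i ∈ Finset.Icc 1 k, (lam i - lamMin) * (1 + C - lam i)) /
        (∑ i ∈ Finset.Icc 1 k, (1 - lam i)) :=
  yang_second_inequality_general C lamMin k lam hk hmono hupper hlt hpos hyang
end

section
/- Let λ_min ≤ λ_1 ≤ ⋯ ≤ λ_{k+1} be real numbers with λ_k < λ_{k+1}, λ_k ≤ 1 + C for some C > 0, Σ_{i=1}^k(1−λ_i) ≥ 0, and suppose the Yang-type inequality Σ_{i=1}^k (λ_{k+1}−λ_i)²(1−λ_i) ≤ C·Σ_{i=1}^k (λ_{k+1}−λ_i)(λ_i−λ_min) holds. Then the Hile–Protter type inequality holds: Σ_{i=1}^k (λ_i−λ_min)/(λ_{k+1}−λ_i) ≥ (1/C)·Σ_{i=1}^k (1−λ_i). -/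
/-!
Write `a i = L - x i > 0`, `b i = x i - m = (L - m) - a i` and `S = ∑ (1 - x i) ≥ 0`.
Chebyshev's sum inequality for the similarly ordered `a i ^ 2` and `1 - x i`, the Yang-type
hypothesis and Cauchy–Schwarz `(∑ a i) ^ 2 ≤ #s * ∑ a i ^ 2` combine into the bound
`(∑ a i) * S ≤ #s * C * ∑ b i` on `L - m`. On the other hand `b / a` is increasing in `x` while
`a` is decreasing, so Chebyshev again gives `#s * ∑ b i ≤ (∑ b i / a i) * ∑ a i` (Jensen's
inequality for `x ↦ x / (L - m - x)` in the paper). Chaining the two and cancelling `∑ a i`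
gives `S ≤ C * ∑ b i / a i`.
-/

open Finset

section

variable {ι : Type*} (s : Finset ι) (x : ι → ℝ) {m L : ℝ}

lemma sum_sq_mul_sum_one_sub_le_card_mul_sum (hL : ∀ i ∈ s, x i ≤ L) :
    (∑ i ∈ s, (L - x i) ^ 2) * ∑ i ∈ s, (1 - x i)
      ≤ #s * ∑ i ∈ s, (L - x i) ^ 2 * (1 - x i) := by
  refine MonovaryOn.sum_mul_sum_le_card_mul_sum fun i hi j _ hij => ?_
  have hji : x j < x i := by linarith
  exact pow_le_pow_left₀ (sub_nonneg.mpr (hL i hi)) (by linarith) 2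

lemma card_mul_sum_sub_le_sum_div_mul_sum (hmL : m ≤ L) (hL : ∀ i ∈ s, x i < L) :
    #s * ∑ i ∈ s, (x i - m) ≤ (∑ i ∈ s, (x i - m) / (L - x i)) * ∑ i ∈ s, (L - x i) := by
  have hanti : AntivaryOn (fun i => (x i - m) / (L - x i)) (fun i => L - x i) s := by
    intro i hi j hj hij
    have hji : x j < x i := by linarith
    rw [div_le_div_iff₀ (sub_pos.mpr (hL j hj)) (sub_pos.mpr (hL i hi))]
    nlinarith
  calc #s * ∑ i ∈ s, (x i - m)
      = #s * ∑ i ∈ s, (x i - m) / (L - x i) * (L - x i) := by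
        congr 1
        exact sum_congr rfl fun i hi => (div_mul_cancel₀ _ (sub_pos.mpr (hL i hi)).ne').symm
    _ ≤ _ := hanti.card_mul_sum_le_sum_mul_sum

lemma sum_mul_sum_one_sub_le_of_yang {C : ℝ} (hC : 0 < C) (hs : s.Nonempty)
    (hL : ∀ i ∈ s, x i < L) (hS : 0 ≤ ∑ i ∈ s, (1 - x i))
    (hyang : ∑ i ∈ s, (L - x i) ^ 2 * (1 - x i) ≤ C * ∑ i ∈ s, (L - x i) * (x i - m)) :
    (∑ i ∈ s, (L - x i)) * ∑ i ∈ s, (1 - x i) ≤ #s * C * ∑ i ∈ s, (x i - m) := by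
  set A := ∑ i ∈ s, (L - x i)
  set Q := ∑ i ∈ s, (L - x i) ^ 2
  set S := ∑ i ∈ s, (1 - x i)
  have hA : 0 < A := sum_pos (fun i hi => sub_pos.mpr (hL i hi)) hs
  have hP : ∑ i ∈ s, (L - x i) * (x i - m) = (L - m) * A - Q := by
    rw [mul_sum, ← sum_sub_distrib]
    exact sum_congr rfl fun _ _ => by ring
  have hB : ∑ i ∈ s, (x i - m) = #s * (L - m) - A := by
    rw [← nsmul_eq_mul, ← sum_const, ← sum_sub_distrib]
    exact sum_congr rfl fun _ _ => by ring
  have hcheb := sum_sq_mul_sum_one_sub_le_card_mul_sum s x fun i hi => (hL i hi).le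
  have hcs : A ^ 2 ≤ #s * Q := sq_sum_le_card_mul_sum_sq
  have hk : (0 : ℝ) ≤ #s := Nat.cast_nonneg _
  refine le_of_mul_le_mul_left ?_ hA
  calc A * (A * S) = A ^ 2 * S := by ring
    _ ≤ #s * Q * S := mul_le_mul_of_nonneg_right hcs hS
    _ ≤ #s * (#s * (C * ((L - m) * A - Q))) := by
        rw [mul_assoc, ← hP]
        exact mul_le_mul_of_nonneg_left (hcheb.trans (by gcongr)) hk
    _ ≤ #s * C * (#s * (L - m) * A - A ^ 2) := by nlinarith [mul_nonneg hk hC.le]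
    _ = A * (#s * C * ∑ i ∈ s, (x i - m)) := by rw [hB]; ring

theorem hile_protter_of_yang {C : ℝ} (hC : 0 < C) (hmL : m ≤ L) (hL : ∀ i ∈ s, x i < L)
    (hS : 0 ≤ ∑ i ∈ s, (1 - x i))
    (hyang : ∑ i ∈ s, (L - x i) ^ 2 * (1 - x i) ≤ C * ∑ i ∈ s, (L - x i) * (x i - m)) :
    (1 / C) * ∑ i ∈ s, (1 - x i) ≤ ∑ i ∈ s, (x i - m) / (L - x i) := by
  obtain rfl | hs := s.eq_empty_or_nonempty
  · simp
  have hA : 0 < ∑ i ∈ s, (L - x i) := sum_pos (fun i hi => sub_pos.mpr (hL i hi)) hs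
  rw [one_div, inv_mul_le_iff₀ hC]
  refine le_of_mul_le_mul_left ?_ hA
  calc _ ≤ #s * C * ∑ i ∈ s, (x i - m) := sum_mul_sum_one_sub_le_of_yang s x hC hs hL hS hyang
    _ = C * (#s * ∑ i ∈ s, (x i - m)) := by ring
    _ ≤ C * ((∑ i ∈ s, (x i - m) / (L - x i)) * ∑ i ∈ s, (L - x i)) :=
        mul_le_mul_of_nonneg_left (card_mul_sum_sub_le_sum_div_mul_sum s x hmL hL) hC.le
    _ = _ := by ring

end

theorem hile_protter_inequality_general (C lamMin : ℝ) (k : ℕ) (lam : ℕ → ℝ)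
    (hC : 0 < C)
    (hmin : lamMin ≤ lam 1)
    (hmono : ∀ i j, 1 ≤ i → i ≤ j → j ≤ k + 1 → lam i ≤ lam j)
    (hlt : lam k < lam (k+1))
    (hnonneg : 0 ≤ ∑ i ∈ Finset.Icc 1 k, (1 - lam i))
    (hyang : ∑ i ∈ Finset.Icc 1 k, (lam (k+1) - lam i) ^ 2 * (1 - lam i)
      ≤ C * ∑ i ∈ Finset.Icc 1 k, (lam (k+1) - lam i) * (lam i - lamMin)) :
    (1 / C) * ∑ i ∈ Finset.Icc 1 k, (1 - lam i)
      ≤ ∑ i ∈ Finset.Icc 1 k, (lam i - lamMin) / (lam (k+1) - lam i) := by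
  have hmL : lamMin ≤ lam (k + 1) := hmin.trans (hmono 1 (k + 1) le_rfl (by omega) le_rfl)
  have hL : ∀ i ∈ Finset.Icc 1 k, lam i < lam (k + 1) := fun i hi => by
    obtain ⟨h1, hk⟩ := Finset.mem_Icc.mp hi
    exact (hmono i k h1 hk (by omega)).trans_lt hlt
  exact hile_protter_of_yang _ lam hC hmL hL hnonneg hyang

/-- discrete Hile–Protter inequality: if `λ_min ≤ λ_1 ≤ ⋯ ≤ λ_{k+1}`,
`λ_k < λ_{k+1}`, `λ_k ≤ 1 + C` with `C > 0`, `Σ_{i=1}^k (1−λ_i) ≥ 0`, and the Yang-type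
inequality holds, then
`Σ_{i=1}^k (λ_i−λ_min)/(λ_{k+1}−λ_i) ≥ (1/C)·Σ_{i=1}^k (1−λ_i)`. -/
theorem hile_protter_inequality (C lamMin : ℝ) (k : ℕ) (lam : ℕ → ℝ)
    (hC : 0 < C) (hk : 1 ≤ k)
    (hmin : lamMin ≤ lam 1)
    (hmono : ∀ i j, 1 ≤ i → i ≤ j → j ≤ k + 1 → lam i ≤ lam j)
    (hupper : lam k ≤ 1 + C)
    (hlt : lam k < lam (k+1))
    (hnonneg : 0 ≤ ∑ i ∈ Finset.Icc 1 k, (1 - lam i))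
    (hyang : ∑ i ∈ Finset.Icc 1 k, (lam (k+1) - lam i) ^ 2 * (1 - lam i)
      ≤ C * ∑ i ∈ Finset.Icc 1 k, (lam (k+1) - lam i) * (lam i - lamMin)) :
    (1 / C) * ∑ i ∈ Finset.Icc 1 k, (1 - lam i)
      ≤ ∑ i ∈ Finset.Icc 1 k, (lam i - lamMin) / (lam (k+1) - lam i) :=
  hile_protter_inequality_general C lamMin k lam hC hmin hmono hlt hnonneg hyang
end

section
/- (Cheng–Yang recursion) Let 0 < a_1 ≤ a_2 ≤ ⋯ ≤ a_{k+1} be positive reals and θ > 0 such that Σ_{i=1}^k (a_{k+1}−a_i)² ≤ θ·Σ_{i=1}^k a_i(a_{k+1}−a_i). Define F_k = (1+θ/2)·( (1/k)Σ_{i=1}^k a_i )² − (1/k)Σ_{i=1}^k a_i². Then F_{k+1} ≤ ((k+1)/k)^θ · F_k. -/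
/-!
Write `s₁, s₂` for the sums of `a i` and `a i ^ 2` over `i ≤ k` and `x = a (k+1)`. Cleared of denominators, `L F_k - F_{k+1}` is a quadratic form in `(x, s₁)`
plus a nonnegative multiple of the slack of Yang's inequality. For `L` the cubic Taylor
polynomial of `exp (2θ/(2k+1))` this form is positive semidefinite: its determinant is
`θ² (k+1)²` times a polynomial with positive coefficients. Finally
`2/(2k+1) ≤ log (1 + 1/k)`, so this `L` is at most `((k+1)/k)^θ`, and `F_k ≥ 0`.
-/

open Finset Real

noncomputable def yangF (θ m q : ℝ) : ℝ := (1 + θ / 2) * m ^ 2 - q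

lemma sum_sub_sq_eq {ι : Type*} (s : Finset ι) (f : ι → ℝ) (x : ℝ) :
    ∑ i ∈ s, (x - f i) ^ 2 = #s * x ^ 2 - 2 * x * ∑ i ∈ s, f i + ∑ i ∈ s, f i ^ 2 := by
  simp only [sub_sq, sum_add_distrib, sum_sub_distrib, sum_const, nsmul_eq_mul, mul_sum]

lemma sum_mul_sub_eq {ι : Type*} (s : Finset ι) (f : ι → ℝ) (x : ℝ) :
    ∑ i ∈ s, f i * (x - f i) = x * ∑ i ∈ s, f i - ∑ i ∈ s, f i ^ 2 := by
  simp only [mul_sub, sum_sub_distrib, mul_sum, sq, mul_comm]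

section Step

variable {n θ s₁ s₂ x : ℝ}

lemma yangF_nonneg (hn : 0 < n) (hθ : 0 ≤ θ)
    (h : n * x ^ 2 - 2 * x * s₁ + s₂ ≤ θ * (x * s₁ - s₂)) :
    0 ≤ yangF θ (1 / n * s₁) (1 / n * s₂) := by
  have key : n ^ 2 * (1 + θ) * yangF θ (1 / n * s₁) (1 / n * s₂) =
      (n * x - (1 + θ / 2) * s₁) ^ 2 + θ / 2 * (1 + θ / 2) * s₁ ^ 2 +
        n * (θ * (x * s₁ - s₂) - (n * x ^ 2 - 2 * x * s₁ + s₂)) := by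
    unfold yangF
    field_simp
    ring
  have : 0 ≤ n ^ 2 * (1 + θ) * yangF θ (1 / n * s₁) (1 / n * s₂) := by
    rw [key]
    have := mul_nonneg hn.le (sub_nonneg.2 h)
    positivity
  exact (mul_nonneg_iff_of_pos_left (by positivity)).1 this

/-- Up to positive factors, `B - θ (1 + θ) / 2` and `B ^ 2 - (1 + θ) (2n + 1 + θ) B + (1 + θ) ^ 2 θ n`
are the leading coefficient and the determinant of the quadratic form in `(x, s₁)` to which
`L F_n - F_{n+1}` reduces modulo the slack of the hypothesis. -/
theorem yangF_succ_le_mul {L B : ℝ} (hn : 0 < n) (hθ : 0 ≤ θ) (hL : n / (n + 1) ≤ L)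
    (hB : B = L * (n + 1) ^ 2 - n ^ 2 + θ * n) (hA : θ * (1 + θ) / 2 < B)
    (hΦ : 0 ≤ B ^ 2 - (1 + θ) * (2 * n + 1 + θ) * B + (1 + θ) ^ 2 * θ * n)
    (h : n * x ^ 2 - 2 * x * s₁ + s₂ ≤ θ * (x * s₁ - s₂)) :
    yangF θ (1 / (n + 1) * (s₁ + x)) (1 / (n + 1) * (s₂ + x ^ 2)) ≤
      L * yangF θ (1 / n * s₁) (1 / n * s₂) := by
  set A := B - θ * (1 + θ) / 2
  set D := L * (n + 1) ^ 2 - n * (n + 1)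
  have hA₀ : 0 < A := sub_pos.2 hA
  have hD : 0 ≤ D := by
    have := mul_le_mul_of_nonneg_right hL (sq_nonneg (n + 1))
    rw [div_mul_eq_mul_div, sq, ← mul_assoc, mul_div_cancel_right₀ _ (by positivity)] at this
    linarith
  have key : A * (1 + θ) * (n + 1) ^ 2 * n ^ 2 *
      (L * yangF θ (1 / n * s₁) (1 / n * s₂) -
        yangF θ (1 / (n + 1) * (s₁ + x)) (1 / (n + 1) * (s₂ + x ^ 2))) =
      (A * n * x - (1 + θ / 2) * B * s₁) ^ 2 +
        (1 + θ / 2) * θ / 2 * (B ^ 2 - (1 + θ) * (2 * n + 1 + θ) * B + (1 + θ) ^ 2 * θ * n) *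
          s₁ ^ 2 +
        A * D * n * (θ * (x * s₁ - s₂) - (n * x ^ 2 - 2 * x * s₁ + s₂)) := by
    simp only [A, D, hB, yangF]
    field_simp
    ring
  have hrhs : 0 ≤ A * (1 + θ) * (n + 1) ^ 2 * n ^ 2 *
      (L * yangF θ (1 / n * s₁) (1 / n * s₂) -
        yangF θ (1 / (n + 1) * (s₁ + x)) (1 / (n + 1) * (s₂ + x ^ 2))) := by
    rw [key]
    have := mul_nonneg (mul_nonneg (mul_nonneg hA₀.le hD) hn.le) (sub_nonneg.2 h)
    have := mul_nonneg (mul_nonneg (by positivity : 0 ≤ (1 + θ / 2) * θ / 2) hΦ) (sq_nonneg s₁)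
    positivity
  exact sub_nonneg.1 ((mul_nonneg_iff_of_pos_left (by positivity)).1 hrhs)

end Step

lemma two_div_le_log_one_add_inv {a : ℝ} (ha : 0 < a) : 2 / (2 * a + 1) ≤ log (1 + a⁻¹) := by
  have := le_hasSum (hasSum_log_one_add_inv ha) 0 fun j _ => by positivity
  simpa [div_eq_mul_inv] using this

lemma sum_pow_div_factorial_le_rpow {n θ : ℝ} (hn : 0 < n) (hθ : 0 ≤ θ) (N : ℕ) :
    ∑ i ∈ range N, (2 * θ / (2 * n + 1)) ^ i / i.factorial ≤ ((n + 1) / n) ^ θ := by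
  have hlog : 2 / (2 * n + 1) ≤ log ((n + 1) / n) := by
    rw [add_div, div_self hn.ne', one_div]
    exact two_div_le_log_one_add_inv hn
  calc ∑ i ∈ range N, (2 * θ / (2 * n + 1)) ^ i / i.factorial
      ≤ exp (2 * θ / (2 * n + 1)) := sum_le_exp_of_nonneg (by positivity) N
    _ ≤ exp (log ((n + 1) / n) * θ) := by
      rw [exp_le_exp, mul_div_right_comm, mul_comm _ θ, mul_comm _ θ]
      exact mul_le_mul_of_nonneg_left hlog hθ
    _ = ((n + 1) / n) ^ θ := (rpow_def_of_pos (by positivity) θ).symm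

lemma taylor_factor_admissible {n θ B : ℝ} (hn : 0 < n) (hθ : 0 ≤ θ)
    (hB : B = (∑ i ∈ range 4, (2 * θ / (2 * n + 1)) ^ i / i.factorial) * (n + 1) ^ 2
      - n ^ 2 + θ * n) :
    θ * (1 + θ) / 2 < B ∧
      0 ≤ B ^ 2 - (1 + θ) * (2 * n + 1 + θ) * B + (1 + θ) ^ 2 * θ * n := by
  simp only [sum_range_succ, sum_range_zero, Nat.factorial] at hB
  subst hB
  set W := 2 * n + 1
  have hW : 0 < W := by positivity
  constructor
  · rw [← sub_pos]
    convert_to 0 < (6 * W ^ 4 + 3 * W ^ 2 * (8 * n ^ 2 + 8 * n + 3) * θ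
      + 3 * W * (4 * n + 3) * θ ^ 2 + 8 * (n + 1) ^ 2 * θ ^ 3) / (6 * W ^ 3)
    · field_simp
      push_cast
      ring
    · positivity
  · convert_to 0 ≤ θ ^ 2 * (n + 1) ^ 2 * (36 * W ^ 4 + 24 * W ^ 3 * (4 * n + 5) * θ
      + 24 * W ^ 2 * (2 * n ^ 2 + 8 * n + 7) * θ ^ 2 + 48 * W * (4 * n + 3) * θ ^ 3
      + 64 * (n + 1) ^ 2 * θ ^ 4) / (36 * W ^ 6)
    · field_simp
      push_cast
      ring
    · positivity

theorem cheng_yang_recursion_general (k : ℕ) (a : ℕ → ℝ) (θ : ℝ) (F : ℕ → ℝ)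
    (hk : 1 ≤ k) (hθ : 0 < θ)
    (hineq : ∑ i ∈ Finset.Icc 1 k, (a (k+1) - a i) ^ 2
      ≤ θ * ∑ i ∈ Finset.Icc 1 k, a i * (a (k+1) - a i))
    (hF : ∀ j, F j = (1 + θ/2) * ((1/(j:ℝ)) * ∑ i ∈ Finset.Icc 1 j, a i) ^ 2
      - (1/(j:ℝ)) * ∑ i ∈ Finset.Icc 1 j, (a i) ^ 2) :
    F (k+1) ≤ (((k:ℝ)+1)/(k:ℝ)) ^ θ * F k := by
  have hn : (0 : ℝ) < k := by exact_mod_cast hk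
  have hcon := hineq
  rw [sum_sub_sq_eq, sum_mul_sub_eq, Nat.card_Icc, Nat.add_sub_cancel] at hcon
  have hFk : F k = yangF θ (1 / k * ∑ i ∈ Icc 1 k, a i) (1 / k * ∑ i ∈ Icc 1 k, a i ^ 2) := hF k
  have hFk1 : F (k + 1) = yangF θ (1 / (k + 1) * (∑ i ∈ Icc 1 k, a i + a (k + 1)))
      (1 / (k + 1) * (∑ i ∈ Icc 1 k, a i ^ 2 + a (k + 1) ^ 2)) := by
    rw [hF, ← sum_Icc_succ_top (by omega : 1 ≤ k + 1), ← sum_Icc_succ_top (by omega : 1 ≤ k + 1)]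
    push_cast
    rfl
  obtain ⟨hA, hΦ⟩ := taylor_factor_admissible hn hθ.le rfl
  have hL : (k : ℝ) / (k + 1) ≤ ∑ i ∈ range 4, (2 * θ / (2 * k + 1)) ^ i / i.factorial := by
    have hy : 0 ≤ 2 * θ / (2 * k + 1) := by positivity
    calc (k : ℝ) / (k + 1) ≤ 1 := (div_le_one (by positivity)).2 (by linarith)
      _ ≤ _ := by
        simp only [sum_range_succ, sum_range_zero, Nat.factorial]
        push_cast
        nlinarith [pow_nonneg hy 3]
  rw [hFk1, hFk]
  exact (yangF_succ_le_mul hn hθ.le hL rfl hA hΦ hcon).trans <| mul_le_mul_of_nonneg_right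
    (sum_pow_div_factorial_le_rpow hn hθ.le 4) (yangF_nonneg hn hθ.le hcon)

/-- Cheng–Yang recursion: let `0 < a_1 ≤ ⋯ ≤ a_{k+1}` and `θ > 0` with
`Σ_{i=1}^k (a_{k+1}−a_i)² ≤ θ·Σ_{i=1}^k a_i (a_{k+1}−a_i)`, and set
`F_j = (1+θ/2)((1/j)Σ_{i=1}^j a_i)² − (1/j)Σ_{i=1}^j a_i²`.
Then `F_{k+1} ≤ ((k+1)/k)^θ · F_k`. -/
theorem cheng_yang_recursion (k : ℕ) (a : ℕ → ℝ) (θ : ℝ) (F : ℕ → ℝ)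
    (hk : 1 ≤ k) (hθ : 0 < θ)
    (hpos : ∀ i, 1 ≤ i → i ≤ k + 1 → 0 < a i)
    (hmono : ∀ i j, 1 ≤ i → i ≤ j → j ≤ k + 1 → a i ≤ a j)
    (hineq : ∑ i ∈ Finset.Icc 1 k, (a (k+1) - a i) ^ 2
      ≤ θ * ∑ i ∈ Finset.Icc 1 k, a i * (a (k+1) - a i))
    (hF : ∀ j, F j = (1 + θ/2) * ((1/(j:ℝ)) * ∑ i ∈ Finset.Icc 1 j, a i) ^ 2
      - (1/(j:ℝ)) * ∑ i ∈ Finset.Icc 1 j, (a i) ^ 2) :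
    F (k+1) ≤ (((k:ℝ)+1)/(k:ℝ)) ^ θ * F k :=
  cheng_yang_recursion_general k a θ F hk hθ hineq hF
end
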